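/- For all integers n ≥ 1 and δ ≥ 1 there exists a constant c = c(n,δ) ≥ 0 with the following property. Suppose G is an almost torsion-free group with a finite generating set S of n elements whose Cayley graph X = Γ(G,S) is δ-hyperbolic. Then for every nontrivial finite subgroup U ≤ G, the diameter of the convex hull X(U) (formed in X relative to the constant δ) is at most c(n,δ). -/

import Mathlib

noncomputable section

namespace KW

open Metric Set Pointwise

variable {X : Type*} [MetricSpace X]

/-- `s` is (the image of) a unit-speed geodesic segment joining `x` to `y`. -/
def IsGeodesicSegment (s : Set X) (x y : X) : Prop :=
  ∃ (b : ℝ) (f : ℝ → X), 0 ≤ b ∧ f 0 = x ∧ f b = y ∧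
    (∀ u ∈ Set.Icc (0 : ℝ) b, ∀ v ∈ Set.Icc (0 : ℝ) b, dist (f u) (f v) = |u - v|) ∧
    s = f '' Set.Icc 0 b

/-- A geodesic metric space. -/
def GeodesicSpace (X : Type*) [MetricSpace X] : Prop :=
  ∀ x y : X, ∃ s : Set X, IsGeodesicSegment s x y

/-- `X` is `δ`-hyperbolic: geodesic, and every geodesic triangle is `δ`-thin. -/
def DeltaHyperbolic (δ : ℝ) (X : Type*) [MetricSpace X] : Prop :=
  GeodesicSpace X ∧
    ∀ (x y z : X) (s₁ s₂ s₃ : Set X),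
      IsGeodesicSegment s₁ x y → IsGeodesicSegment s₂ y z → IsGeodesicSegment s₃ x z →
      ∀ p ∈ s₁, ∃ q ∈ s₂ ∪ s₃, dist p q ≤ δ

/-- `A` is an `ε`-quasiconvex subset of `X`. -/
def Quasiconvex (ε : ℝ) (A : Set X) : Prop :=
  ∀ x ∈ A, ∀ y ∈ A, ∀ s : Set X, IsGeodesicSegment s x y → ∀ p ∈ s, ∃ a ∈ A, dist p a ≤ ε

/-- The Gromov product `(y,z)_x`. -/
def gromov (x y z : X) : ℝ := (dist y x + dist z x - dist y z) / 2

def IsGeodesicRay (γ : ℝ → X) : Prop :=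
  ∀ s t : ℝ, 0 ≤ s → 0 ≤ t → dist (γ s) (γ t) = |s - t|

def IsBiGeodesic (γ : ℝ → X) : Prop :=
  ∀ s t : ℝ, dist (γ s) (γ t) = |s - t|

/-- `A` and `B` are `K`-Hausdorff close. -/
def HClose (K : ℝ) (A B : Set X) : Prop :=
  (∀ a ∈ A, ∃ b ∈ B, dist a b ≤ K) ∧ ∀ b ∈ B, ∃ a ∈ A, dist a b ≤ K

def HausdorffClose (A B : Set X) : Prop := ∃ K : ℝ, HClose K A B

/-- Two geodesic rays are asymptotic iff their images are Hausdorff close. -/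
def Asymptotic (γ γ' : ℝ → X) : Prop :=
  HausdorffClose (γ '' Set.Ici 0) (γ' '' Set.Ici 0)

def GRay (X : Type*) [MetricSpace X] : Type _ := {γ : ℝ → X // IsGeodesicRay γ}

theorem asymptotic_refl (γ : ℝ → X) : Asymptotic γ γ :=
  ⟨0, fun a ha => ⟨a, ha, by simp⟩, fun b hb => ⟨b, hb, by simp⟩⟩

theorem asymptotic_symm {γ γ' : ℝ → X} (h : Asymptotic γ γ') : Asymptotic γ' γ := by
  obtain ⟨K, h₁, h₂⟩ := h
  refine ⟨K, fun a ha => ?_, fun b hb => ?_⟩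
  · obtain ⟨b, hb, hd⟩ := h₂ a ha
    exact ⟨b, hb, by rwa [dist_comm]⟩
  · obtain ⟨a, ha, hd⟩ := h₁ b hb
    exact ⟨a, ha, by rwa [dist_comm]⟩

theorem asymptotic_trans {γ₁ γ₂ γ₃ : ℝ → X} (h : Asymptotic γ₁ γ₂)
    (h' : Asymptotic γ₂ γ₃) : Asymptotic γ₁ γ₃ := by
  obtain ⟨K, h₁, h₂⟩ := h
  obtain ⟨K', h₁', h₂'⟩ := h'
  refine ⟨K + K', fun a ha => ?_, fun c hc => ?_⟩
  · obtain ⟨b, hb, hab⟩ := h₁ a ha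
    obtain ⟨c, hc, hbc⟩ := h₁' b hb
    exact ⟨c, hc, (dist_triangle a b c).trans (by linarith)⟩
  · obtain ⟨b, hb, hbc⟩ := h₂' c hc
    obtain ⟨a, ha, hab⟩ := h₂ b hb
    exact ⟨a, ha, (dist_triangle a b c).trans (by linarith)⟩

def raySetoid (X : Type*) [MetricSpace X] : Setoid (GRay X) where
  r γ γ' := Asymptotic γ.1 γ'.1
  iseqv := ⟨fun γ => asymptotic_refl γ.1, fun h => asymptotic_symm h,
    fun h h' => asymptotic_trans h h'⟩

/-- The (geodesic) boundary of `X`: asymptoty classes of geodesic rays. -/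
def Boundary (X : Type*) [MetricSpace X] : Type _ := Quotient (raySetoid X)

def Boundary.mk {X : Type*} [MetricSpace X] (γ : GRay X) : Boundary X :=
  Quotient.mk (raySetoid X) γ

/-- A strongly geodesic metric space. -/
def StronglyGeodesic (X : Type*) [MetricSpace X] : Prop :=
  GeodesicSpace X ∧
  (∀ γ : ℝ → X, IsGeodesicRay γ → ∀ y : X,
      ∃ γ' : ℝ → X, IsGeodesicRay γ' ∧ γ' 0 = y ∧ Asymptotic γ γ') ∧
  (∀ γ₁ γ₂ : ℝ → X, IsGeodesicRay γ₁ → IsGeodesicRay γ₂ → γ₁ 0 = γ₂ 0 →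
      ¬ Asymptotic γ₁ γ₂ →
      ∃ γ : ℝ → X, IsBiGeodesic γ ∧
        HausdorffClose (Set.range γ) (γ₁ '' Set.Ici 0 ∪ γ₂ '' Set.Ici 0)) ∧
  (∀ (x : X) (u : ℕ → X),
      (∀ M : ℝ, ∃ N : ℕ, ∀ n, N ≤ n → ∀ m, N ≤ m → M ≤ gromov x (u n) (u m)) →
      ∃ γ : ℝ → X, IsGeodesicRay γ ∧ γ 0 = x ∧
        ∀ M : ℝ, ∃ N : ℕ, ∀ n, N ≤ n → ∀ m, N ≤ m → M ≤ gromov x (γ (n : ℝ)) (u m))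

/-- The sequence `u` converges to the boundary point `p`, with basepoint `x`. -/
def SeqConvTo (x : X) (u : ℕ → X) (p : Boundary X) : Prop :=
  ∃ γ : GRay X, Boundary.mk γ = p ∧
    ∀ M : ℝ, ∃ N : ℕ, ∀ n, N ≤ n → ∀ m, N ≤ m → M ≤ gromov x (u n) (γ.1 (m : ℝ))

/-- `γ` is a geodesic ray in the class of the boundary point `p`. -/
def RayTo (γ : ℝ → X) (p : Boundary X) : Prop :=
  ∃ h : IsGeodesicRay γ, Boundary.mk ⟨γ, h⟩ = p

/-- `γ` is a biinfinite geodesic whose two ends converge to `p` and `q`. -/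
def BiGeodesicJoins (γ : ℝ → X) (p q : Boundary X) : Prop :=
  IsBiGeodesic γ ∧ SeqConvTo (γ 0) (fun n => γ (-(n : ℝ))) p ∧
    SeqConvTo (γ 0) (fun n => γ (n : ℝ)) q

/-- `s` is (the image of) a geodesic joining two points of `X ∪ ∂X`. -/
def JoinSet : X ⊕ Boundary X → X ⊕ Boundary X → Set X → Prop
  | Sum.inl x, Sum.inl y, s => IsGeodesicSegment s x y
  | Sum.inl x, Sum.inr p, s => ∃ γ : ℝ → X, γ 0 = x ∧ RayTo γ p ∧ s = γ '' Set.Ici 0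
  | Sum.inr p, Sum.inl x, s => ∃ γ : ℝ → X, γ 0 = x ∧ RayTo γ p ∧ s = γ '' Set.Ici 0
  | Sum.inr p, Sum.inr q, s => ∃ γ : ℝ → X, BiGeodesicJoins γ p q ∧ s = Set.range γ

/-- The convex hull `Conv(A)` of a subset `A ⊆ X ∪ ∂X`. -/
def geoConv (A : Set (X ⊕ Boundary X)) : Set X :=
  {x | (∃ a : X, A = {Sum.inl a} ∧ x = a) ∨
    ∃ p ∈ A, ∃ q ∈ A, p ≠ q ∧ ∃ s : Set X, JoinSet p q s ∧ x ∈ s}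

/-- The distance between two subsets of `X`. -/
def setDist (A B : Set X) : ℝ := sInf (Set.image2 dist A B)

/-- `a` is a projection of `p` on `A` (relative to `δ`). -/
def IsProjection (δ : ℝ) (A : Set X) (p a : X) : Prop :=
  a ∈ A ∧ ∀ a' ∈ A, dist p a ≤ dist p a' + δ

/-- `f` restricted to `[0,L]` is a unit-speed geodesic from `x` to `y`. -/
def GeodParam (f : ℝ → X) (L : ℝ) (x y : X) : Prop :=
  0 ≤ L ∧ f 0 = x ∧ f L = y ∧
    ∀ u ∈ Set.Icc (0 : ℝ) L, ∀ v ∈ Set.Icc (0 : ℝ) L, dist (f u) (f v) = |u - v|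

/-- Concatenation of three paths, the first on `[0,a]`, the second on `[0,b]`. -/
def concat3 (f₁ f₂ f₃ : ℝ → X) (a b : ℝ) : ℝ → X := fun t =>
  if t ≤ a then f₁ t else if t ≤ a + b then f₂ (t - a) else f₃ (t - a - b)

/-- `f` is a `(lam, ε)`-quasigeodesic on `[a,b]`. -/
def QuasigeodesicOn (lam ε : ℝ) (f : ℝ → X) (a b : ℝ) : Prop :=
  ∀ s ∈ Set.Icc a b, ∀ t ∈ Set.Icc a b, |s - t| ≤ lam * dist (f s) (f t) + ε

/-- The action of `G` on `X` is by isometries. -/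
def IsometricAction (G Y : Type*) [Group G] [MetricSpace Y] [MulAction G Y] : Prop :=
  ∀ (g : G) (x y : Y), dist (g • x) (g • y) = dist x y

section GroupAction

variable {G : Type*} [Group G]

/-- The limit set `Λ(U) ⊆ ∂X` of a subgroup `U ≤ G`. -/
def limitSet (X : Type*) [MetricSpace X] [MulAction G X] (U : Subgroup G) :
    Set (Boundary X) :=
  {p | ∃ x₀ : X, ∃ u : ℕ → U, SeqConvTo x₀ (fun n => ((u n : G)) • x₀) p}

/-- The small displacement set `E(U)` (relative to `δ`). -/
def smallDispSet (X : Type*) [MetricSpace X] [MulAction G X] (δ : ℝ) (U : Subgroup G) :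
    Set X :=
  {x | ∃ u : G, u ∈ U ∧ u ≠ 1 ∧ dist x (u • x) ≤ 100 * δ}

/-- `Z(U) = Conv(Λ(U) ∪ E(U))`. -/
def ZSet (X : Type*) [MetricSpace X] [MulAction G X] (δ : ℝ) (U : Subgroup G) : Set X :=
  geoConv (Sum.inr '' limitSet X U ∪ Sum.inl '' smallDispSet X δ U)

/-- The convex hull `X(U)`: the closure of `Conv(Z(U))`. -/
def cHull (X : Type*) [MetricSpace X] [MulAction G X] (δ : ℝ) (U : Subgroup G) : Set X :=
  closure (geoConv (Sum.inl '' ZSet X δ U))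

/-- The weak convex hull `X_U = Conv(Λ(U))`. -/
def weakHull (X : Type*) [MetricSpace X] [MulAction G X] (U : Subgroup G) : Set X :=
  geoConv (Sum.inr '' limitSet X U)

/-- `l_V(g) = d(X(V), gX(V))`. -/
def lV (X : Type*) [MetricSpace X] [MulAction G X] (δ : ℝ) (V : Subgroup G) (g : G) : ℝ :=
  setDist (cHull X δ V) (g • cHull X δ V)

/-- The translation length of `g`. -/
def translationLength (X : Type*) [MetricSpace X] [MulAction G X] (g : G) : ℝ :=
  sInf (Set.range fun x : X => dist x (g • x))

/-- The asymptotic translation length of `g`. -/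
def asympTranslationLength (X : Type*) [MetricSpace X] [MulAction G X] (g : G) : ℝ :=
  Filter.liminf (fun n : ℕ => translationLength X (g ^ n) / (n : ℝ)) Filter.atTop

/-- An elementary move between `G`-tuples `(U₁,…,U_n; h₁,…,h_m)`. -/
def gMove {n m : ℕ} (M M' : (Fin n → Subgroup G) × (Fin m → G)) : Prop :=
  (M'.2 = M.2 ∧ ∃ (j : Fin n) (g : G),
      g ∈ Subgroup.closure (Set.range M.2 ∪ ⋃ i ∈ {i : Fin n | i ≠ j}, ((M.1 i : Set G))) ∧
      (∀ i, i ≠ j → M'.1 i = M.1 i) ∧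
      M'.1 j = Subgroup.map (MulAut.conj g).toMonoidHom (M.1 j)) ∨
  (M'.1 = M.1 ∧ ∃ (i : Fin m) (g₁ g₂ : G),
      g₁ ∈ Subgroup.closure (M.2 '' {j : Fin m | j ≠ i} ∪ ⋃ t, ((M.1 t : Set G))) ∧
      g₂ ∈ Subgroup.closure (M.2 '' {j : Fin m | j ≠ i} ∪ ⋃ t, ((M.1 t : Set G))) ∧
      (∀ j, j ≠ i → M'.2 j = M.2 j) ∧
      M'.2 i = g₁ * M.2 i * g₂)

/-- Equivalence of `G`-tuples: a finite chain of elementary moves. -/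
def gEquiv {n m : ℕ} :
    (Fin n → Subgroup G) × (Fin m → G) → (Fin n → Subgroup G) × (Fin m → G) → Prop :=
  Relation.ReflTransGen gMove

/-- The family of factors `U₁,…,U_n, F(h₁),…,F(h_m)`. -/
def FF {n : ℕ} (m : ℕ) (U : Fin n → Subgroup G) : Fin n ⊕ Fin m → Type _
  | Sum.inl j => ↥(U j)
  | Sum.inr _ => FreeGroup PUnit

instance ffGroup {n : ℕ} (m : ℕ) (U : Fin n → Subgroup G) :
    (i : Fin n ⊕ Fin m) → Group (FF m U i)
  | Sum.inl j => inferInstanceAs (Group ↥(U j))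
  | Sum.inr _ => inferInstanceAs (Group (FreeGroup PUnit))

def ffHoms {n m : ℕ} (U : Fin n → Subgroup G) (H : Fin m → G) :
    (i : Fin n ⊕ Fin m) → FF m U i →* G
  | Sum.inl j => (U j).subtype
  | Sum.inr j => FreeGroup.lift fun _ => H j

/-- The canonical homomorphism `U₁ ∗ ⋯ ∗ U_n ∗ F(H) → G`. -/
def freeProdHom {n m : ℕ} (U : Fin n → Subgroup G) (H : Fin m → G) :
    Monoid.CoprodI (FF m U) →* G :=
  Monoid.CoprodI.lift (ffHoms U H)

/-- `W = U₁ ∗ ⋯ ∗ U_n ∗ F(H)`: the canonical homomorphism is injective with image `W`. -/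
def IsFreeProdDecomp {n m : ℕ} (U : Fin n → Subgroup G) (H : Fin m → G)
    (W : Subgroup G) : Prop :=
  Function.Injective (freeProdHom U H) ∧ (freeProdHom U H).range = W

/-- Minimality of the `G`-pair `(V; H)` (relative to a `1`-hyperbolic `G`-space `X`). -/
def PairMinimal (X : Type*) [MetricSpace X] [MulAction G X] {m : ℕ}
    (V : Subgroup G) (H : Fin m → G) : Prop :=
  ∀ (V' : Subgroup G) (H' : Fin m → G),
    gEquiv ((fun _ : Fin 1 => V), H) ((fun _ : Fin 1 => V'), H') →
    (∑ i, lV X 1 V (H i)) ≤ (∑ i, lV X 1 V' (H' i)) + 1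

/-- An elementary Nielsen move on tuples of elements of `G`. -/
def NielsenMove {k : ℕ} (g g' : Fin k → G) : Prop :=
  (∃ i : Fin k, (∀ j, j ≠ i → g' j = g j) ∧ g' i = (g i)⁻¹) ∨
  (∃ i j : Fin k, i ≠ j ∧ (∀ t, t ≠ i → g' t = g t) ∧ g' i = g i * g j) ∨
  (∃ i j : Fin k, i ≠ j ∧ g' = g ∘ Equiv.swap i j)

/-- Nielsen equivalence: a finite chain of elementary Nielsen moves. -/
def NielsenEq {k : ℕ} : (Fin k → G) → (Fin k → G) → Prop :=
  Relation.ReflTransGen NielsenMove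

/-- Word length of `g` with respect to the (symmetrized) generating set `S`. -/
def wordLength (S : Set G) (g : G) : ℕ :=
  sInf {n : ℕ | ∃ f : Fin n → G, (∀ i, f i ∈ S ∨ (f i)⁻¹ ∈ S) ∧ (List.ofFn f).prod = g}

/-- `(X, ι)` is a model of the Cayley graph `Γ(G,S)`. -/
def IsCayleyGraph (G : Type*) [Group G] (S : Set G) (X : Type*) [MetricSpace X]
    [MulAction G X] (ι : G → X) : Prop :=
  IsometricAction G X ∧
  (∀ g h : G, ι (g * h) = g • ι h) ∧
  Function.Injective ι ∧
  GeodesicSpace X ∧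
  (∀ g h : G, dist (ι g) (ι h) = (wordLength S (g⁻¹ * h) : ℝ)) ∧
  ∀ x : X, ∃ g h : G, wordLength S (g⁻¹ * h) ≤ 1 ∧
    ∃ s : Set X, IsGeodesicSegment s (ι g) (ι h) ∧ x ∈ s

/-- `H` is a quasiconvex subgroup (with respect to the Cayley graph model `(X, ι)`). -/
def QCSubgroup (X : Type*) [MetricSpace X] (ι : G → X) (H : Subgroup G) : Prop :=
  ∃ ε : ℝ, 0 ≤ ε ∧ Quasiconvex ε (ι '' (H : Set G))

end GroupAction

/-- Every nontrivial element of finite order has finite centralizer. -/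
def AlmostTorsionFree (G : Type*) [Group G] : Prop :=
  ∀ g : G, g ≠ 1 → IsOfFinOrder g → ((Subgroup.centralizer {g} : Subgroup G) : Set G).Finite

/-- `U` is nontrivial and admits no nontrivial free product decomposition. -/
def FreelyIndecomposable (U : Type*) [Group U] : Prop :=
  Nontrivial U ∧
    ¬ ∃ A B : Subgroup U, A ≠ ⊥ ∧ B ≠ ⊥ ∧
        Function.Bijective (Monoid.Coprod.lift A.subtype B.subtype)

def InfiniteCyclic (U : Type*) [Group U] : Prop := Infinite U ∧ IsCyclic U

def VirtuallyCyclic (U : Type*) [Group U] : Prop :=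
  ∃ H : Subgroup U, H.index ≠ 0 ∧ IsCyclic ↥H

def NonElementary (U : Type*) [Group U] : Prop := ¬ Finite U ∧ ¬ VirtuallyCyclic U

end KW

universe u v

namespace KW

open Pointwise Metric Set

/-!
A finite subgroup `U` has bounded orbits, so `Λ(U) = ∅` and `Z(U) = Conv(E(U))`; since a point of
a geodesic `[a, b]` is within `d(a, b) / 2` of an endpoint, each of the two hull operations at most
doubles the radius of a ball around `E(U)`, and closure does not enlarge a closed ball.

A quasicentre `c` of a `U`-orbit is moved at most `4δ + 2 ≤ 100δ` by every element of `U`, so it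
suffices to bound `d(x, y)` when `x` and `y` are both moved at most `100δ` by one nontrivial torsion
element `w`. By thinness of the quadrilateral `x, y, wy, wx`, every point of a geodesic `[x, y]` is
moved at most `304δ` by `w`, so a vertex `g` within `1` of it conjugates `w` into the word ball of
radius `304δ + 2`. These `g` form at most `|B(304δ + 2)| · |C(w)|` elements, and `C(w)` is a finite
subgroup (`G` is almost torsion-free), hence conjugate into `B(4δ + 4)` by the quasicentre argument
again. Vertices chosen near points of `[x, y]` at spacing `3` are distinct, which bounds `d(x, y)`.
-/

section Segments

variable {X : Type*} [MetricSpace X] {s : Set X} {x y p q : X}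

theorem IsGeodesicSegment.left_mem (hs : IsGeodesicSegment s x y) : x ∈ s := by
  obtain ⟨b, f, hb, hf0, -, -, rfl⟩ := hs
  exact ⟨0, ⟨le_rfl, hb⟩, hf0⟩

theorem IsGeodesicSegment.dist_add_dist (hs : IsGeodesicSegment s x y) (hp : p ∈ s) :
    dist p x + dist p y = dist x y := by
  obtain ⟨b, f, hb, rfl, rfl, hf, rfl⟩ := hs
  obtain ⟨t, ht, rfl⟩ := hp
  rw [hf t ht 0 ⟨le_rfl, hb⟩, hf t ht b ⟨hb, le_rfl⟩, hf 0 ⟨le_rfl, hb⟩ b ⟨hb, le_rfl⟩,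
    abs_of_nonneg (by linarith [ht.1]), abs_of_nonpos (by linarith [ht.2]),
    abs_of_nonpos (by linarith)]
  ring

theorem IsGeodesicSegment.dist_le (hs : IsGeodesicSegment s x y) (hp : p ∈ s) :
    dist p x ≤ dist x y := by
  linarith [hs.dist_add_dist hp, dist_nonneg (x := p) (y := y)]

theorem IsGeodesicSegment.dist_eq_abs_sub (hs : IsGeodesicSegment s x y) (hp : p ∈ s)
    (hq : q ∈ s) : dist p q = |dist p x - dist q x| := by
  obtain ⟨b, f, hb, rfl, -, hf, rfl⟩ := hs
  obtain ⟨u, hu, rfl⟩ := hp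
  obtain ⟨v, hv, rfl⟩ := hq
  rw [hf u hu v hv, hf u hu 0 ⟨le_rfl, hb⟩, hf v hv 0 ⟨le_rfl, hb⟩, sub_zero, sub_zero,
    abs_of_nonneg hu.1, abs_of_nonneg hv.1]

theorem IsGeodesicSegment.exists_dist_eq (hs : IsGeodesicSegment s x y) {t : ℝ} (ht₀ : 0 ≤ t)
    (ht : t ≤ dist x y) : ∃ p ∈ s, dist p x = t := by
  obtain ⟨b, f, hb, rfl, rfl, hf, rfl⟩ := hs
  rw [hf 0 ⟨le_rfl, hb⟩ b ⟨hb, le_rfl⟩, abs_of_nonpos (by linarith), neg_sub, sub_zero] at ht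
  refine ⟨f t, ⟨t, ⟨ht₀, ht⟩, rfl⟩, ?_⟩
  rw [hf t ⟨ht₀, ht⟩ 0 ⟨le_rfl, hb⟩, sub_zero, abs_of_nonneg ht₀]

theorem IsGeodesicSegment.symm (hs : IsGeodesicSegment s x y) : IsGeodesicSegment s y x := by
  obtain ⟨b, f, hb, rfl, rfl, hf, rfl⟩ := hs
  have hrefl : ∀ t ∈ Icc 0 b, b - t ∈ Icc 0 b := fun t ht =>
    ⟨by linarith [ht.2], by linarith [ht.1]⟩
  refine ⟨b, fun t => f (b - t), hb, by simp, by simp, fun u hu v hv => ?_, ?_⟩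
  · rw [hf _ (hrefl u hu) _ (hrefl v hv), abs_sub_comm]
    ring_nf
  · ext z
    constructor
    · rintro ⟨t, ht, rfl⟩
      exact ⟨b - t, hrefl t ht, by simp⟩
    · rintro ⟨t, ht, rfl⟩
      exact ⟨b - t, hrefl t ht, rfl⟩

theorem IsGeodesicSegment.smul {G : Type*} [Group G] [MulAction G X]
    (hiso : IsometricAction G X) (g : G) (hs : IsGeodesicSegment s x y) :
    IsGeodesicSegment (g • s) (g • x) (g • y) := by
  obtain ⟨b, f, hb, rfl, rfl, hf, rfl⟩ := hs
  refine ⟨b, fun t => g • f t, hb, rfl, rfl, fun u hu v hv => by rw [hiso, hf u hu v hv], ?_⟩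
  rw [← Set.image_smul, Set.image_image]

theorem dist_le_of_dist_le_of_mem_segment {δ r : ℝ} {w : X} (hs : IsGeodesicSegment s w y)
    (hq : q ∈ s) (hpq : dist p q ≤ δ) (hwy : dist w y ≤ r) :
    dist p y ≤ r - dist p w + 2 * δ := by
  have := hs.dist_add_dist hq
  linarith [dist_triangle p q y, dist_triangle p q w, dist_comm p q]

theorem IsGeodesicSegment.dist_le_three_mul_ncard (hs : IsGeodesicSegment s x y) {T : Set X}
    (hT : T.Finite)
    (hnear : ∀ p ∈ s, ∃ t ∈ T, dist p t ≤ 1) : dist x y ≤ 3 * T.ncard := by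
  set K := ⌊dist x y / 3⌋₊
  have hpts : ∀ k ∈ Finset.range (K + 1), ∃ t ∈ T, ∃ p ∈ s, dist p x = 3 * k ∧ dist p t ≤ 1 := by
    intro k hk
    have hkK : (k : ℝ) ≤ K := Nat.cast_le.2 (Nat.lt_succ_iff.1 (Finset.mem_range.1 hk))
    have h3k : 3 * (k : ℝ) ≤ dist x y := by
      linarith [Nat.floor_le (div_nonneg (dist_nonneg (x := x) (y := y)) zero_le_three)]
    obtain ⟨p, hp, hpx⟩ := hs.exists_dist_eq (by positivity) h3k
    obtain ⟨t, ht, hpt⟩ := hnear p hp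
    exact ⟨t, ht, p, hp, hpx, hpt⟩
  have : Nonempty X := ⟨x⟩
  choose! t ht p hp hpx hpt using hpts
  -- the points `p k` are `3` apart, so they cannot share a `1`-close point of `T`
  have hinj : Set.InjOn t (Finset.range (K + 1) : Set ℕ) := by
    intro k hk k' hk' he
    by_contra hne
    have hsep : (1 : ℝ) ≤ |(k : ℝ) - k'| := by
      exact_mod_cast Int.one_le_abs (sub_ne_zero.2 (Int.natCast_inj.not.2 hne))
    have hdist : dist (p k) (p k') = 3 * |(k : ℝ) - k'| := by
      rw [hs.dist_eq_abs_sub (hp k hk) (hp k' hk'), hpx k hk, hpx k' hk', ← mul_sub, abs_mul,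
        abs_of_pos three_pos]
    have hk₁ := hpt k hk
    rw [he] at hk₁
    linarith [dist_triangle (p k) (t k') (p k'), dist_comm (t k') (p k'), hpt k' hk']
  have hcard : ((K + 1 : ℕ) : ℝ) ≤ T.ncard := by
    exact_mod_cast (Finset.card_range (K + 1)).symm.trans_le <| by
      simpa using Set.ncard_le_ncard_of_injOn t ht hinj hT
  push_cast at hcard
  linarith [Nat.lt_floor_add_one (dist x y / 3)]

end Segments

section Hyperbolic

variable {X : Type*} [MetricSpace X] {δ : ℝ}

theorem DeltaHyperbolic.nonneg (hX : DeltaHyperbolic δ X) (x : X) : 0 ≤ δ := by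
  obtain ⟨s, hs⟩ := hX.1 x x
  obtain ⟨q, -, hq⟩ := hX.2 x x x s s s hs hs hs x hs.left_mem
  exact dist_nonneg.trans hq

theorem DeltaHyperbolic.exists_near_quadrilateral (hX : DeltaHyperbolic δ X) {x y z w : X}
    {s₁ s₂ s₃ s₄ : Set X} (h₁ : IsGeodesicSegment s₁ x y) (h₂ : IsGeodesicSegment s₂ y z)
    (h₃ : IsGeodesicSegment s₃ z w) (h₄ : IsGeodesicSegment s₄ x w) {p : X} (hp : p ∈ s₁) :
    ∃ q ∈ s₂ ∪ s₃ ∪ s₄, dist p q ≤ 2 * δ := by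
  obtain ⟨d, hd⟩ := hX.1 x z
  obtain ⟨q, hq | hq, hpq⟩ := hX.2 x y z s₁ s₂ d h₁ h₂ hd p hp
  · exact ⟨q, Or.inl (Or.inl hq), by linarith [hX.nonneg p]⟩
  · obtain ⟨r, hr | hr, hqr⟩ := hX.2 x z w d s₃ s₄ hd h₃ h₄ q hq
    · exact ⟨r, Or.inl (Or.inr hr), by linarith [dist_triangle p q r]⟩
    · exact ⟨r, Or.inr hr, by linarith [dist_triangle p q r]⟩

theorem IsometricAction.dist_smul_le {G : Type*} [Group G] [MulAction G X]
    (hiso : IsometricAction G X) (u : G) (p y : X) :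
    dist p (u • p) ≤ 2 * dist p y + dist y (u • y) := by
  have := dist_triangle4 p y (u • y) (u • p)
  rw [hiso, dist_comm y p] at this
  linarith

theorem DeltaHyperbolic.dist_smul_le_of_mem_segment {G : Type*} [Group G] [MulAction G X]
    {D : ℝ} (hX : DeltaHyperbolic δ X) (hiso : IsometricAction G X) (u : G) {s : Set X}
    {x y : X} (hs : IsGeodesicSegment s x y) (hx : dist x (u • x) ≤ D)
    (hy : dist y (u • y) ≤ D) {p : X} (hp : p ∈ s) :
    dist p (u • p) ≤ 4 * δ + 3 * D := by
  obtain ⟨s₂, h₂⟩ := hX.1 y (u • y)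
  obtain ⟨s₄, h₄⟩ := hX.1 x (u • x)
  obtain ⟨q, (hq | hq) | hq, hpq⟩ :=
    hX.exists_near_quadrilateral hs h₂ (hs.smul hiso u).symm h₄ hp
  · have : dist p y ≤ 2 * δ + D := by
      linarith [dist_triangle p q y, h₂.dist_le hq]
    linarith [hiso.dist_smul_le u p y]
  · -- `q = u • a` with `a ∈ s`; `a` and `p` lie at almost the same distance from `x`
    obtain ⟨a, ha, rfl⟩ := hq
    have hax : dist (u • a) (u • x) = dist a x := hiso u a x
    have hap : dist a p ≤ 2 * δ + D := by
      rw [hs.dist_eq_abs_sub ha hp, abs_sub_le_iff]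
      constructor <;> linarith [dist_triangle4 p (u • a) (u • x) x,
        dist_triangle4 (u • a) p x (u • x), dist_comm p (u • a), dist_comm x (u • x)]
    have := dist_triangle p (u • a) (u • p)
    rw [hiso] at this
    linarith [dist_nonneg (x := x) (y := u • x)]
  · have : dist p x ≤ 2 * δ + D := by
      linarith [dist_triangle p q x, h₄.dist_le hq]
    linarith [hiso.dist_smul_le u p x]

theorem DeltaHyperbolic.dist_midpoint_le (hX : DeltaHyperbolic δ X) {z w m y : X} {s : Set X}
    {r : ℝ} (hs : IsGeodesicSegment s z w) (hm : m ∈ s) (hmz : dist m z = dist z w / 2)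
    (hzy : dist z y ≤ r) (hwy : dist w y ≤ r) :
    dist m y ≤ r + 2 * δ - dist z w / 2 := by
  have hmw : dist m w = dist z w / 2 := by linarith [hs.dist_add_dist hm]
  obtain ⟨sw, hsw⟩ := hX.1 w y
  obtain ⟨sz, hsz⟩ := hX.1 z y
  obtain ⟨q, hq | hq, hmq⟩ := hX.2 z w y s sw sz hs hsw hsz m hm
  · linarith [dist_le_of_dist_le_of_mem_segment hsw hq hmq hwy]
  · linarith [dist_le_of_dist_le_of_mem_segment hsz hq hmq hzy]

theorem DeltaHyperbolic.exists_quasicenter (hX : DeltaHyperbolic δ X) {Y : Set X}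
    (hY : Bornology.IsBounded Y) (hne : Y.Nonempty) :
    ∃ (r : ℝ) (c : X), Y ⊆ closedBall c r ∧
      ∀ z w : X, Y ⊆ closedBall z r → Y ⊆ closedBall w r → dist z w ≤ 4 * δ + 2 := by
  set R := {r : ℝ | ∃ c, Y ⊆ closedBall c r}
  obtain ⟨y₀, hy₀⟩ := hne
  have hR : R.Nonempty := (hY.subset_closedBall y₀).imp fun r hr => ⟨y₀, hr⟩
  have hRbdd : BddBelow R := ⟨0, fun r ⟨c, hc⟩ => dist_nonneg.trans (hc hy₀)⟩
  obtain ⟨r, ⟨c, hc⟩, hr⟩ := exists_lt_of_csInf_lt hR (lt_add_one (sInf R))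
  refine ⟨sInf R + 1, c, hc.trans (closedBall_subset_closedBall hr.le), fun z w hz hw => ?_⟩
  obtain ⟨s, hs⟩ := hX.1 z w
  obtain ⟨m, hm, hmz⟩ := hs.exists_dist_eq (by positivity) (half_le_self dist_nonneg)
  -- the midpoint of `[z, w]` would otherwise be a strictly better centre than allowed by `sInf R`
  have hmR : sInf R + 1 + 2 * δ - dist z w / 2 ∈ R := by
    refine ⟨m, fun y hy => ?_⟩
    rw [mem_closedBall, dist_comm]
    exact hX.dist_midpoint_le hs hm hmz (mem_closedBall'.1 (hz hy)) (mem_closedBall'.1 (hw hy))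
  linarith [csInf_le hRbdd hmR]

theorem DeltaHyperbolic.exists_forall_dist_smul_le {G : Type*} [Group G] [MulAction G X]
    (hX : DeltaHyperbolic δ X) (hiso : IsometricAction G X) (K : Subgroup G) (x₀ : X)
    (hK : Bornology.IsBounded ((· • x₀) '' (K : Set G))) :
    ∃ c : X, ∀ v ∈ K, dist c (v • c) ≤ 4 * δ + 2 := by
  obtain ⟨r, c, hc, hcenter⟩ := hX.exists_quasicenter hK ⟨x₀, 1, K.one_mem, one_smul G x₀⟩
  refine ⟨c, fun v hv => hcenter c (v • c) hc ?_⟩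
  rintro _ ⟨k, hk, rfl⟩
  have := hc ⟨v⁻¹ * k, K.mul_mem (K.inv_mem hv) hk, rfl⟩
  rwa [mem_closedBall, ← hiso v, smul_smul, mul_inv_cancel_left] at this

end Hyperbolic

section WordBall

variable {G : Type*} [Group G]

theorem exists_word_length_eq_wordLength {S : Set G} (hgen : Subgroup.closure S = ⊤) (g : G) :
    ∃ f : Fin (wordLength S g) → G, (∀ i, f i ∈ S ∨ (f i)⁻¹ ∈ S) ∧ (List.ofFn f).prod = g := by
  have hg : g ∈ Submonoid.closure (S ∪ S⁻¹) := by
    rw [← Subgroup.closure_toSubmonoid, hgen]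
    exact Subgroup.mem_top g
  obtain ⟨l, hl, rfl⟩ := Submonoid.exists_list_of_mem_closure hg
  exact Nat.sInf_mem (s := {n | ∃ f : Fin n → G, (∀ i, f i ∈ S ∨ (f i)⁻¹ ∈ S) ∧ _})
    ⟨l.length, l.get, fun i => hl _ (l.get_mem i), by rw [List.ofFn_get]⟩

variable [DecidableEq G]

def wordBall (S : Finset G) (R : ℕ) : Finset G :=
  (Fintype.piFinset fun _ : Fin R => insert 1 (S ∪ S⁻¹)).image fun f => (List.ofFn f).prod

theorem card_wordBall_le (S : Finset G) (R : ℕ) :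
    (wordBall S R).card ≤ (2 * S.card + 1) ^ R := by
  have hletters : (insert 1 (S ∪ S⁻¹)).card ≤ 2 * S.card + 1 := by
    calc (insert 1 (S ∪ S⁻¹)).card ≤ (S ∪ S⁻¹).card + 1 := Finset.card_insert_le _ _
      _ ≤ S.card + S⁻¹.card + 1 := by gcongr; exact Finset.card_union_le _ _
      _ = 2 * S.card + 1 := by rw [Finset.card_inv]; ring
  calc (wordBall S R).card ≤ (insert 1 (S ∪ S⁻¹)).card ^ R :=
        Finset.card_image_le.trans (by rw [Fintype.card_piFinset_const])
    _ ≤ (2 * S.card + 1) ^ R := Nat.pow_le_pow_left hletters R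

theorem mem_wordBall_of_wordLength_le {S : Finset G} (hgen : Subgroup.closure (S : Set G) = ⊤)
    {g : G} {R : ℕ} (hg : wordLength (S : Set G) g ≤ R) : g ∈ wordBall S R := by
  obtain ⟨f, hf, hprod⟩ := exists_word_length_eq_wordLength hgen g
  obtain ⟨k, rfl⟩ := Nat.exists_eq_add_of_le hg
  -- pad the geodesic word with trivial letters
  refine Finset.mem_image.2 ⟨Fin.append f fun _ => 1, Fintype.mem_piFinset.2 fun i => ?_, ?_⟩
  · refine Fin.addCases (fun i => ?_) (fun _ => ?_) i
    · rw [Fin.append_left]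
      rcases hf i with h | h
      · exact Finset.mem_insert_of_mem (Finset.mem_union_left _ h)
      · exact Finset.mem_insert_of_mem (Finset.mem_union_right _ (Finset.mem_inv'.2 h))
    · rw [Fin.append_right]
      exact Finset.mem_insert_self _ _
  · rw [List.ofFn_fin_append, List.prod_append, hprod, List.ofFn_const, List.prod_replicate,
      one_pow, mul_one]

end WordBall

section Conjugation

variable {G : Type*} [Group G] {w : G}

theorem setOf_conj_eq_subset_image_centralizer {g₀ : G} :
    {g : G | g⁻¹ * w * g = g₀⁻¹ * w * g₀} ⊆ (· * g₀) '' (Subgroup.centralizer {w} : Set G) := by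
  intro g hg
  refine ⟨g * g₀⁻¹, Subgroup.mem_centralizer_singleton_iff.2 ?_, inv_mul_cancel_right g g₀⟩
  calc g * g₀⁻¹ * w = g * (g₀⁻¹ * w * g₀) * g₀⁻¹ := by group
    _ = g * (g⁻¹ * w * g) * g₀⁻¹ := by rw [hg]
    _ = w * (g * g₀⁻¹) := by group

theorem setOf_conj_eq_finite_and_ncard_le (hC : (Subgroup.centralizer {w} : Set G).Finite)
    (h : G) :
    {g : G | g⁻¹ * w * g = h}.Finite ∧
      {g : G | g⁻¹ * w * g = h}.ncard ≤ (Subgroup.centralizer {w} : Set G).ncard := by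
  rcases Set.eq_empty_or_nonempty {g : G | g⁻¹ * w * g = h} with he | ⟨g₀, rfl⟩
  · simp [he]
  · have hsub := setOf_conj_eq_subset_image_centralizer (w := w) (g₀ := g₀)
    exact ⟨(hC.image _).subset hsub,
      (Set.ncard_le_ncard hsub (hC.image _)).trans (Set.ncard_image_le hC)⟩

theorem setOf_conj_mem_finite_and_ncard_le (hC : (Subgroup.centralizer {w} : Set G).Finite)
    (B : Finset G) :
    {g : G | g⁻¹ * w * g ∈ B}.Finite ∧
      {g : G | g⁻¹ * w * g ∈ B}.ncard ≤ B.card * (Subgroup.centralizer {w} : Set G).ncard := by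
  have hunion : {g : G | g⁻¹ * w * g ∈ B} = ⋃ h ∈ B, {g : G | g⁻¹ * w * g = h} := by
    ext g; simp
  rw [hunion]
  refine ⟨B.finite_toSet.biUnion fun h _ => (setOf_conj_eq_finite_and_ncard_le hC h).1, ?_⟩
  calc (⋃ h ∈ B, {g : G | g⁻¹ * w * g = h}).ncard
      ≤ ∑ h ∈ B, {g : G | g⁻¹ * w * g = h}.ncard := Finset.set_ncard_biUnion_le _ _
    _ ≤ ∑ _h ∈ B, (Subgroup.centralizer {w} : Set G).ncard :=
        Finset.sum_le_sum fun h _ => (setOf_conj_eq_finite_and_ncard_le hC h).2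
    _ = B.card * (Subgroup.centralizer {w} : Set G).ncard := by rw [Finset.sum_const, smul_eq_mul]

end Conjugation

section CayleyGraph

variable {G : Type*} [Group G] {X : Type*} [MetricSpace X] [MulAction G X] {S : Finset G}
  {ι : G → X}

theorem IsCayleyGraph.exists_dist_le_one (hCay : IsCayleyGraph G (S : Set G) X ι) (x : X) :
    ∃ g : G, dist x (ι g) ≤ 1 := by
  obtain ⟨g, h, hgh, s, hs, hx⟩ := hCay.2.2.2.2.2 x
  have hlen : dist (ι g) (ι h) ≤ 1 := by
    rw [hCay.2.2.2.2.1]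
    exact_mod_cast hgh
  exact ⟨g, by linarith [hs.dist_add_dist hx, dist_comm x (ι g), dist_nonneg (x := x) (y := ι h)]⟩

theorem IsCayleyGraph.dist_smul_eq (hCay : IsCayleyGraph G (S : Set G) X ι) (g w : G) :
    dist (ι g) (w • ι g) = wordLength (S : Set G) (g⁻¹ * w * g) := by
  rw [← hCay.2.1, hCay.2.2.2.2.1, mul_assoc]

theorem IsCayleyGraph.conj_mem_wordBall [DecidableEq G] (hCay : IsCayleyGraph G (S : Set G) X ι)
    (hgen : Subgroup.closure (S : Set G) = ⊤) {p : X} {g : G} (hg : dist p (ι g) ≤ 1) (w : G)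
    {R : ℕ} (hR : dist p (w • p) + 2 ≤ R) : g⁻¹ * w * g ∈ wordBall S R := by
  refine mem_wordBall_of_wordLength_le hgen (Nat.cast_le (α := ℝ).1 ?_)
  rw [← hCay.dist_smul_eq]
  linarith [dist_triangle4 (ι g) p (w • p) (w • ι g), hCay.1 w p (ι g), dist_comm (ι g) p]

theorem IsCayleyGraph.ncard_subgroup_le {δ : ℕ} (hCay : IsCayleyGraph G (S : Set G) X ι)
    (hgen : Subgroup.closure (S : Set G) = ⊤) (hX : DeltaHyperbolic δ X) (K : Subgroup G)
    (hK : (K : Set G).Finite) : (K : Set G).ncard ≤ (2 * S.card + 1) ^ (4 * δ + 4) := by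
  classical
  obtain ⟨c, hc⟩ := hX.exists_forall_dist_smul_le hCay.1 K (ι 1) (hK.image _).isBounded
  obtain ⟨g, hg⟩ := hCay.exists_dist_le_one c
  have hmaps : ∀ k ∈ (K : Set G), g⁻¹ * k * g ∈ (wordBall S (4 * δ + 4) : Set G) := fun k hk =>
    hCay.conj_mem_wordBall hgen hg k (by push_cast; linarith [hc k hk])
  calc (K : Set G).ncard ≤ (wordBall S (4 * δ + 4) : Set G).ncard :=
        Set.ncard_le_ncard_of_injOn _ hmaps fun k _ k' _ h => by simpa using h
    _ ≤ (2 * S.card + 1) ^ (4 * δ + 4) := by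
        rw [Set.ncard_coe_finset]; exact card_wordBall_le S _

end CayleyGraph

section SmallDisplacement

variable {G : Type*} [Group G] {X : Type*} [MetricSpace X] [MulAction G X] {S : Finset G}
  {ι : G → X} {δ : ℕ}

theorem IsCayleyGraph.dist_le_of_isOfFinOrder (hCay : IsCayleyGraph G (S : Set G) X ι)
    (hgen : Subgroup.closure (S : Set G) = ⊤) (hX : DeltaHyperbolic δ X)
    (hAT : AlmostTorsionFree G) {w : G} (hw : w ≠ 1) (hfo : IsOfFinOrder w) {x y : X}
    (hx : dist x (w • x) ≤ 100 * δ) (hy : dist y (w • y) ≤ 100 * δ) :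
    dist x y ≤ 3 * (2 * S.card + 1) ^ (308 * δ + 6) := by
  classical
  have hC := hAT w hw hfo
  obtain ⟨hT, hTcard⟩ := setOf_conj_mem_finite_and_ncard_le hC (wordBall S (304 * δ + 2))
  set T := {g : G | g⁻¹ * w * g ∈ wordBall S (304 * δ + 2)}
  obtain ⟨s, hs⟩ := hX.1 x y
  have hnear : ∀ p ∈ s, ∃ t ∈ ι '' T, dist p t ≤ 1 := by
    intro p hp
    obtain ⟨g, hg⟩ := hCay.exists_dist_le_one p
    refine ⟨ι g, ⟨g, hCay.conj_mem_wordBall hgen hg w ?_, rfl⟩, hg⟩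
    push_cast
    linarith [hX.dist_smul_le_of_mem_segment hCay.1 w hs hx hy hp]
  have hcount : (ι '' T).ncard ≤ (2 * S.card + 1) ^ (308 * δ + 6) := by
    calc (ι '' T).ncard ≤ T.ncard := Set.ncard_image_le hT
      _ ≤ (wordBall S (304 * δ + 2)).card * (Subgroup.centralizer {w} : Set G).ncard := hTcard
      _ ≤ (2 * S.card + 1) ^ (304 * δ + 2) * (2 * S.card + 1) ^ (4 * δ + 4) :=
          Nat.mul_le_mul (card_wordBall_le S _) (hCay.ncard_subgroup_le hgen hX _ hC)
      _ = (2 * S.card + 1) ^ (308 * δ + 6) := by rw [← pow_add]; ring_nf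
  calc dist x y ≤ 3 * (ι '' T).ncard :=
        hs.dist_le_three_mul_ncard (hT.image ι) hnear
    _ ≤ 3 * (2 * S.card + 1) ^ (308 * δ + 6) := by exact_mod_cast Nat.mul_le_mul_left 3 hcount

theorem IsCayleyGraph.smallDispSet_subset_closedBall (hCay : IsCayleyGraph G (S : Set G) X ι)
    (hgen : Subgroup.closure (S : Set G) = ⊤) (hX : DeltaHyperbolic δ X) (hδ : 1 ≤ δ)
    (hAT : AlmostTorsionFree G) (U : Subgroup G) (hU : (U : Set G).Finite) :
    ∃ c : X, smallDispSet X δ U ⊆ closedBall c (3 * (2 * S.card + 1) ^ (308 * δ + 6)) := by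
  have : Finite U := hU.to_subtype
  obtain ⟨c, hc⟩ := hX.exists_forall_dist_smul_le hCay.1 U (ι 1) (hU.image _).isBounded
  refine ⟨c, fun a ⟨u, hu, hu1, ha⟩ => mem_closedBall.2 ?_⟩
  have hδ' : (1 : ℝ) ≤ δ := Nat.one_le_cast.2 hδ
  exact hCay.dist_le_of_isOfFinOrder hgen hX hAT hu1
    (Submonoid.isOfFinOrder_coe.2 (isOfFinOrder_of_finite (⟨u, hu⟩ : U))) ha
    (by linarith [hc u hu])

end SmallDisplacement

section Hull

variable {X : Type*} [MetricSpace X]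

theorem gromov_le_dist (x y z : X) : gromov x y z ≤ dist y x := by
  unfold gromov
  linarith [dist_triangle z y x, dist_comm y z]

theorem limitSet_eq_empty_of_finite {G : Type*} [Group G] [MulAction G X] (U : Subgroup G)
    (hU : (U : Set G).Finite) : limitSet X U = ∅ := by
  refine Set.eq_empty_of_forall_notMem fun p ⟨x₀, u, γ, _, hconv⟩ => ?_
  obtain ⟨C, hC⟩ := (hU.image fun v => dist (v • x₀) x₀).bddAbove
  obtain ⟨N, hN⟩ := hconv (C + 1)
  linarith [hN N le_rfl N le_rfl, gromov_le_dist x₀ ((u N : G) • x₀) (γ.1 N),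
    hC ⟨u N, (u N).2, rfl⟩]

theorem geoConv_subset_closedBall {A : Set X} {c : X} {r : ℝ} (hA : A ⊆ closedBall c r) :
    geoConv (Sum.inl '' A) ⊆ closedBall c (2 * r) := by
  rintro x (⟨a, hA₁, rfl⟩ | ⟨_, ⟨a, ha, rfl⟩, _, ⟨b, hb, rfl⟩, -, s, hs, hx⟩)
  · have hx : x ∈ A := Sum.inl_injective.mem_set_image.1 (by rw [hA₁]; rfl)
    have := mem_closedBall.1 (hA hx)
    rw [mem_closedBall]
    linarith [dist_nonneg (x := x) (y := c)]
  · -- `x` lies within `dist a b / 2 ≤ r` of one of the endpoints `a`, `b`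
    have hs : IsGeodesicSegment s a b := hs
    have ha := mem_closedBall.1 (hA ha)
    have hb := mem_closedBall.1 (hA hb)
    rw [mem_closedBall]
    linarith [hs.dist_add_dist hx, dist_triangle x a c, dist_triangle x b c,
      dist_triangle_right a b c]

end Hull

theorem statement14_general (n δ : ℕ) (hδ : 1 ≤ δ) :
    ∃ c : ℝ, 0 ≤ c ∧ ∀ (G : Type u) (X : Type v)
      [Group G] [MetricSpace X] [MulAction G X] (S : Finset G) (ι : G → X),
      S.card = n → Subgroup.closure (S : Set G) = ⊤ →
      IsCayleyGraph G (S : Set G) X ι → DeltaHyperbolic (δ : ℝ) X →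
      AlmostTorsionFree G →
      ∀ U : Subgroup G, U ≠ ⊥ → ((U : Set G)).Finite →
        ∀ x ∈ cHull X (δ : ℝ) U, ∀ y ∈ cHull X (δ : ℝ) U, dist x y ≤ c := by
  refine ⟨8 * (3 * (2 * n + 1) ^ (308 * δ + 6)), by positivity, ?_⟩
  intro G X _ _ _ S ι hcard hgen hCay hX hAT U _ hU x hx y hy
  subst hcard
  obtain ⟨c, hE⟩ := hCay.smallDispSet_subset_closedBall hgen hX hδ hAT U hU
  have hZ : ZSet X δ U ⊆ closedBall c (2 * (3 * (2 * S.card + 1) ^ (308 * δ + 6))) := by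
    rw [ZSet, limitSet_eq_empty_of_finite U hU, image_empty, empty_union]
    exact geoConv_subset_closedBall hE
  have hhull : cHull X δ U ⊆ closedBall c (2 * (2 * (3 * (2 * S.card + 1) ^ (308 * δ + 6)))) :=
    closure_minimal (geoConv_subset_closedBall hZ) isClosed_closedBall
  linarith [dist_triangle_right x y c, mem_closedBall.1 (hhull hx), mem_closedBall.1 (hhull hy)]

theorem statement14 (n δ : ℕ) (hn : 1 ≤ n) (hδ : 1 ≤ δ) :
    ∃ c : ℝ, 0 ≤ c ∧ ∀ (G : Type u) (X : Type v)
      [Group G] [MetricSpace X] [MulAction G X] (S : Finset G) (ι : G → X),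
      S.card = n → Subgroup.closure (S : Set G) = ⊤ →
      IsCayleyGraph G (S : Set G) X ι → DeltaHyperbolic (δ : ℝ) X →
      AlmostTorsionFree G →
      ∀ U : Subgroup G, U ≠ ⊥ → ((U : Set G)).Finite →
        ∀ x ∈ cHull X (δ : ℝ) U, ∀ y ∈ cHull X (δ : ℝ) U, dist x y ≤ c :=
  statement14_general n δ hδ

end KW
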